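/- For every positive integer i, the polynomial identity ∑_{k=1}^{i+2} (b(i,2,k)/k!)·t^k = (1/(i+2)!)·t(t+1)(t+2)⋯(t+i)·(t + i/2) holds in ℚ[t], where b(i,2,k) = ∑_{P(k,i+2)} 1/(l₁⋯l_k) − (1/2)∑_{P(k,i+1)} 1/(l₁⋯l_k). -/

import Mathlib

open Finset Polynomial

/-- The set of `k`-tuples of positive integers summing to `n`. -/
def P (k n : ℕ) : Finset (Fin k → ℕ) :=
  (Finset.Nat.antidiagonalTuple k n).filter fun l => ∀ i, 0 < l i

/-- `∑_{(l₁,…,l_k)∈P(k,n)} 1/(l₁⋯l_k)`. -/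
def S (k n : ℕ) : ℚ := ∑ l ∈ P k n, (∏ i, (l i : ℚ))⁻¹

/-- `e_l(1,2,…,m)` : the l-th elementary symmetric polynomial evaluated at 1,…,m. -/
def esym (m l : ℕ) : ℚ := (((Finset.range m).val.map fun i => ((i : ℚ) + 1)).esymm l)

/-!
`S k n` is the coefficient of `xⁿ` in `Lᵏ`, where `L = -log (1 - x) = ∑ xⁿ / n`. Differentiating
`Lᵏ⁺¹` and using `(1 - x) L' = 1` gives `(n + 1) S(k+1, n+1) = n S(k+1, n) + (k + 1) S(k, n)`, i.e.
`Gₙ(t) = ∑ₖ S(k, n) tᵏ / k!` satisfies `(n + 1) Gₙ₊₁ = (t + n) Gₙ`, so `Gₙ = t(t+1)⋯(t+n-1) / n!`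
(this is `[xⁿ] exp (t L) = [xⁿ] (1 - x)⁻ᵗ`). The claimed polynomial is `G_{i+2} - G_{i+1} / 2`, and
`(t + i + 1) / (i + 2)! - 1 / (2 (i + 1)!) = (t + i / 2) / (i + 2)!`.
-/

/-- `-log (1 - x)`; the junk value `0⁻¹ = 0` gives it constant term `0`. -/
noncomputable def logSeries : PowerSeries ℚ := PowerSeries.mk fun n => (n : ℚ)⁻¹

lemma coeff_logSeries (n : ℕ) : PowerSeries.coeff n logSeries = (n : ℚ)⁻¹ :=
  PowerSeries.coeff_mk _ _

lemma one_sub_X_mul_derivative_logSeries :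
    (1 - PowerSeries.X) * PowerSeries.derivative ℚ logSeries = 1 := by
  have hcoeff (j : ℕ) : PowerSeries.coeff j (PowerSeries.derivative ℚ logSeries) = 1 := by
    rw [PowerSeries.coeff_derivative, coeff_logSeries]
    push_cast
    exact inv_mul_cancel₀ (by positivity)
  ext (_ | j)
  · simpa [sub_mul] using hcoeff 0
  · simp [sub_mul, hcoeff, PowerSeries.coeff_one]

lemma mem_P {k n : ℕ} {l : Fin k → ℕ} : l ∈ P k n ↔ ∑ i, l i = n ∧ ∀ i, 0 < l i := by
  simp [P, Finset.Nat.mem_antidiagonalTuple]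

lemma S_eq_zero_of_lt {k n : ℕ} (h : n < k) : S k n = 0 := by
  have hP : P k n = ∅ := by
    refine eq_empty_of_forall_notMem fun l hl => ?_
    obtain ⟨hsum, hpos⟩ := mem_P.mp hl
    have : k ≤ ∑ i, l i := by
      simpa using Finset.sum_le_sum fun i (_ : i ∈ univ) => Nat.one_le_iff_ne_zero.mpr (hpos i).ne'
    omega
  simp [S, hP]

/-- Splitting off the first part `l₀ = a` of a composition; the pairs with `a = 0` contribute
nothing because `(0 : ℚ)⁻¹ = 0`. -/
lemma S_succ_left (k n : ℕ) :
    S (k + 1) n = ∑ p ∈ antidiagonal n, (p.1 : ℚ)⁻¹ * S k p.2 := by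
  simp only [S, mul_sum]
  rw [sum_sigma', ← sum_filter_of_ne (p := fun x : (Σ _ : ℕ × ℕ, Fin k → ℕ) => x.1.1 ≠ 0)
    (fun x _ hx h0 => hx (by simp [h0]))]
  symm
  refine sum_bij' (fun x _ => Fin.cons x.1.1 x.2)
    (fun l _ => ⟨(l 0, ∑ i, Fin.tail l i), Fin.tail l⟩) ?_ ?_ ?_ ?_ ?_
  · rintro ⟨⟨a, b⟩, t⟩ hx
    simp only [mem_filter, mem_sigma, HasAntidiagonal.mem_antidiagonal, mem_P] at hx ⊢
    obtain ⟨⟨rfl, rfl, ht⟩, ha⟩ := hx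
    refine ⟨Fin.sum_cons _ _, Fin.cases (Nat.pos_of_ne_zero ha) ht⟩
  · intro l hl
    obtain ⟨hsum, hpos⟩ := mem_P.mp hl
    simp only [mem_filter, mem_sigma, HasAntidiagonal.mem_antidiagonal, mem_P]
    refine ⟨⟨?_, trivial, fun j => hpos j.succ⟩, (hpos 0).ne'⟩
    rw [← hsum, Fin.sum_univ_succ]
    rfl
  · rintro ⟨⟨a, b⟩, t⟩ hx
    simp only [mem_filter, mem_sigma, mem_P] at hx
    simp [hx.1.2.1]
  · exact fun l _ => Fin.cons_self_tail l
  · rintro ⟨⟨a, b⟩, t⟩ _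
    simp [Fin.prod_univ_succ, mul_comm]

lemma S_eq_coeff_pow (k n : ℕ) : S k n = PowerSeries.coeff n (logSeries ^ k) := by
  induction k generalizing n with
  | zero => cases n <;> simp [S, P, PowerSeries.coeff_one]
  | succ k ih => simp only [S_succ_left, ih, pow_succ', PowerSeries.coeff_mul, coeff_logSeries]

lemma S_zero_left_of_ne_zero {n : ℕ} (hn : n ≠ 0) : S 0 n = 0 := by
  simp [S_eq_coeff_pow, PowerSeries.coeff_one, hn]

lemma succ_mul_S_succ_succ (k n : ℕ) :
    ((n : ℚ) + 1) * S (k + 1) (n + 1) = n * S (k + 1) n + (k + 1) * S k n := by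
  have hderiv : (1 - PowerSeries.X) * PowerSeries.derivative ℚ (logSeries ^ (k + 1))
      = (k + 1) • logSeries ^ k := by
    rw [Derivation.leibniz_pow, Nat.add_sub_cancel, smul_eq_mul, mul_smul_comm, mul_left_comm,
      one_sub_X_mul_derivative_logSeries, mul_one]
  have hcoeff := congrArg (PowerSeries.coeff n) hderiv
  rw [sub_mul, one_mul, map_sub, map_nsmul, PowerSeries.coeff_derivative, ← S_eq_coeff_pow,
    ← S_eq_coeff_pow, nsmul_eq_mul] at hcoeff
  cases n with
  | zero => rw [PowerSeries.coeff_zero_X_mul] at hcoeff; push_cast at hcoeff ⊢; linarith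
  | succ n =>
    rw [PowerSeries.coeff_succ_X_mul, PowerSeries.coeff_derivative, ← S_eq_coeff_pow] at hcoeff
    push_cast at hcoeff ⊢
    linarith

noncomputable def stirlingPoly (n : ℕ) : ℚ[X] :=
  ∑ k ∈ range (n + 1), C (S k n / k.factorial) * X ^ k

lemma coeff_stirlingPoly (n m : ℕ) : (stirlingPoly n).coeff m = S m n / m.factorial := by
  simp only [stirlingPoly, finsetSum_coeff, coeff_C_mul_X_pow, sum_ite_eq, mem_range]
  split_ifs with hm
  · rfl
  · rw [S_eq_zero_of_lt (by omega), zero_div]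

lemma C_succ_mul_stirlingPoly_succ (n : ℕ) :
    C ((n : ℚ) + 1) * stirlingPoly (n + 1) = (X + C (n : ℚ)) * stirlingPoly n := by
  ext (_ | m)
  · simp +contextual [coeff_stirlingPoly, S_eq_coeff_pow, PowerSeries.coeff_one]
  · rw [coeff_C_mul, add_mul X, coeff_add, coeff_X_mul, coeff_C_mul, coeff_stirlingPoly,
      coeff_stirlingPoly, coeff_stirlingPoly, Nat.factorial_succ, Nat.cast_mul,
      mul_div_assoc', succ_mul_S_succ_succ]
    field_simp
    push_cast
    ring

lemma stirlingPoly_eq_prod (n : ℕ) :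
    stirlingPoly n = C (1 / (n.factorial : ℚ)) * ∏ j ∈ range n, (X + C (j : ℚ)) := by
  induction n with
  | zero => simp [stirlingPoly, S_eq_coeff_pow]
  | succ n ih =>
    have hC : C ((n : ℚ) + 1) * C (1 / ((n + 1).factorial : ℚ)) = C (1 / (n.factorial : ℚ)) := by
      rw [← C_mul, Nat.factorial_succ]
      push_cast
      field_simp
    refine mul_left_cancel₀ (C_ne_zero.mpr (by positivity : (n : ℚ) + 1 ≠ 0)) ?_
    rw [C_succ_mul_stirlingPoly_succ, ih, prod_range_succ]
    linear_combination (-(∏ j ∈ range n, (X + C (j : ℚ))) * (X + C (n : ℚ))) * hC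

lemma sum_Icc_eq_stirlingPoly {n N : ℕ} (hn : n ≠ 0) (hN : n ≤ N) :
    ∑ k ∈ Icc 1 N, C (S k n / k.factorial) * X ^ k = stirlingPoly n := by
  ext m
  simp only [coeff_stirlingPoly, finsetSum_coeff, coeff_C_mul_X_pow, sum_ite_eq, mem_Icc]
  split_ifs with hm
  · rfl
  · obtain rfl | hm0 := Nat.eq_zero_or_pos m
    · rw [S_zero_left_of_ne_zero hn, zero_div]
    · rw [S_eq_zero_of_lt (by omega), zero_div]

theorem stmt6_general (i : ℕ) :
    ∑ k ∈ Finset.Icc 1 (i + 2),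
        Polynomial.C ((S k (i + 2) - S k (i + 1) / 2) / k.factorial) * X ^ k
      = Polynomial.C (1 / ((i + 2).factorial : ℚ)) *
        (∏ j ∈ Finset.range (i + 1), (X + Polynomial.C (j : ℚ))) *
        (X + Polynomial.C ((i : ℚ) / 2)) := by
  calc _ = ∑ k ∈ Icc 1 (i + 2), C (S k (i + 2) / k.factorial) * X ^ k
        - C (1 / 2) * ∑ k ∈ Icc 1 (i + 2), C (S k (i + 1) / k.factorial) * X ^ k := by
          rw [mul_sum, ← sum_sub_distrib]
          refine sum_congr rfl fun k _ => ?_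
          rw [← mul_assoc, ← C_mul, ← sub_mul, ← C_sub]
          congr 2
          ring
    _ = stirlingPoly (i + 2) - C (1 / 2) * stirlingPoly (i + 1) := by
          rw [sum_Icc_eq_stirlingPoly (by omega) le_rfl,
            sum_Icc_eq_stirlingPoly (by omega) (by omega)]
    _ = _ := by
          have hC : C (1 / ((i + 2).factorial : ℚ)) * C ((i + 1 : ℕ) : ℚ)
              - C (1 / 2) * C (1 / ((i + 1).factorial : ℚ))
              = C (1 / ((i + 2).factorial : ℚ)) * C ((i : ℚ) / 2) := by
            rw [← C_mul, ← C_mul, ← C_mul, ← C_sub, Nat.factorial_succ (i + 1)]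
            congr 1
            push_cast
            field_simp
            ring
          rw [stirlingPoly_eq_prod, stirlingPoly_eq_prod, prod_range_succ]
          linear_combination (∏ j ∈ range (i + 1), (X + C (j : ℚ))) * hC

theorem stmt6 (i : ℕ) (hi : 0 < i) :
    ∑ k ∈ Finset.Icc 1 (i + 2),
        Polynomial.C ((S k (i + 2) - S k (i + 1) / 2) / k.factorial) * X ^ k
      = Polynomial.C (1 / ((i + 2).factorial : ℚ)) *
        (∏ j ∈ Finset.range (i + 1), (X + Polynomial.C (j : ℚ))) *
        (X + Polynomial.C ((i : ℚ) / 2)) :=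
  stmt6_general i
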